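/- For a square matrix A and ρ > -1, the matrix-valued function z ↦ φ(ρ,μ;Az) satisfies the differentiation formula d/dz φ(ρ,μ;Az) = A·φ(ρ,ρ+μ;Az). -/

import Mathlib

open MeasureTheory

/-- The Wright function `φ(ρ,μ;z) = ∑ z^k/(k! Γ(ρk+μ))`, with `1/Γ` the entire
reciprocal Gamma function (Mathlib's `Complex.Gamma` vanishes at the poles). -/
noncomputable def wright (ρ : ℝ) (μ : ℂ) (z : ℂ) : ℂ :=
  ∑' k : ℕ, ((k.factorial : ℂ) * Complex.Gamma (ρ * k + μ))⁻¹ * z ^ k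

/-- The Wright function of a matrix argument. -/
noncomputable def wrightM {n : ℕ} (ρ : ℝ) (μ : ℂ) (A : Matrix (Fin n) (Fin n) ℂ) :
    Matrix (Fin n) (Fin n) ℂ :=
  ∑' k : ℕ, ((k.factorial : ℂ) * Complex.Gamma (ρ * k + μ))⁻¹ • A ^ k

/-- Riemann–Liouville fractional integral of order `a > 0` based at `0`. -/
noncomputable def rlI (a : ℝ) (g : ℝ → ℂ) (y : ℝ) : ℂ :=
  (Real.Gamma a)⁻¹ • ∫ s in (0:ℝ)..y, ((y - s) ^ (a - 1) : ℝ) • g s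

/-- Riemann–Liouville fractional derivative of order `β ∈ (0,1)` based at `0`. -/
noncomputable def rlD (β : ℝ) (g : ℝ → ℂ) (y : ℝ) : ℂ :=
  deriv (rlI (1 - β) g) y

/-!
With `c_k(μ) = 1/(k! Γ(ρk+μ))`, the Wright function of `z • a` in a Banach algebra is the power
series `∑ c_k(μ) z^k a^k`. The recurrence `1/Γ(s) = s/Γ(s+1)` gives
`(k+1) c_{k+1}(μ) = c_k(ρ+μ)`, so differentiating term by term yields the formula. Term-by-term
differentiation needs `∑ |c_k(μ)| r^k < ∞` for every `r`: choosing `-ρ < q < 1`, a shift of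
`ρk+μ` by `⌊qk⌋` steps lands in the half plane `re ≥ 1`, where `1/Γ` is bounded on horizontal
strips, at the cost of a factor `(L(k+1))^{qk}`; since `q < 1` this is beaten by
`k! ≥ ((k+1)/e)^k / e`. Matrices with the `ℓ∞` operator norm form such an algebra.
-/

open Filter Topology

namespace Complex

theorem norm_inv_Gamma_sub_nat_le (w : ℂ) (m : ℕ) :
    ‖(Gamma (w - m))⁻¹‖ ≤ (‖w‖ + m) ^ m * ‖(Gamma w)⁻¹‖ := by
  induction m with
  | zero => simp
  | succ m ih =>
    have hstep := one_div_Gamma_eq_self_mul_one_div_Gamma_add_one (w - (m + 1 : ℕ))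
    rw [show w - (m + 1 : ℕ) + 1 = w - m by push_cast; ring] at hstep
    have hfactor : ‖w - (m + 1 : ℕ)‖ ≤ ‖w‖ + (m + 1 : ℕ) :=
      (norm_sub_le _ _).trans_eq (by rw [norm_natCast])
    have hbase : ‖w‖ + m ≤ ‖w‖ + (m + 1 : ℕ) := by push_cast; linarith
    calc ‖(Gamma (w - (m + 1 : ℕ)))⁻¹‖
        = ‖w - (m + 1 : ℕ)‖ * ‖(Gamma (w - m))⁻¹‖ := by rw [hstep, norm_mul]
      _ ≤ (‖w‖ + (m + 1 : ℕ)) * ((‖w‖ + (m + 1 : ℕ)) ^ m * ‖(Gamma w)⁻¹‖) := by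
          gcongr
          exact ih.trans (by gcongr)
      _ = (‖w‖ + (m + 1 : ℕ)) ^ (m + 1) * ‖(Gamma w)⁻¹‖ := by ring

theorem norm_inv_Gamma_add_nat_le {w : ℂ} (hw : 1 ≤ w.re) (m : ℕ) :
    ‖(Gamma (w + m))⁻¹‖ ≤ ‖(Gamma w)⁻¹‖ := by
  induction m with
  | zero => simp
  | succ m ih =>
    have hnorm : 1 ≤ ‖w + m‖ :=
      hw.trans <| (by simp : w.re ≤ (w + m).re).trans (re_le_norm _)
    have hstep := one_div_Gamma_eq_self_mul_one_div_Gamma_add_one (w + m)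
    calc ‖(Gamma (w + (m + 1 : ℕ)))⁻¹‖ ≤ ‖w + m‖ * ‖(Gamma (w + (m + 1 : ℕ)))⁻¹‖ :=
          le_mul_of_one_le_left (norm_nonneg _) hnorm
      _ = ‖(Gamma (w + m))⁻¹‖ := by rw [hstep, norm_mul, Nat.cast_succ, add_assoc]
      _ ≤ ‖(Gamma w)⁻¹‖ := ih

theorem exists_norm_inv_Gamma_le_of_one_le_re (B : ℝ) :
    ∃ K ≥ 0, ∀ w : ℂ, 1 ≤ w.re → |w.im| ≤ B → ‖(Gamma w)⁻¹‖ ≤ K := by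
  obtain ⟨K, hK⟩ := (isCompact_closedBall (0 : ℂ) (2 + B)).exists_bound_of_continuousOn
    differentiable_one_div_Gamma.continuous.continuousOn
  refine ⟨max K 0, le_max_right _ _, fun w hw him => ?_⟩
  -- shift `w` by an integer into the compact piece `1 ≤ re < 2`, `|im| ≤ B` of the half plane
  set j := ⌊w.re - 1⌋₊
  have hj : (j : ℝ) ≤ w.re - 1 := Nat.floor_le (by linarith)
  have hj' : w.re - 1 < j + 1 := Nat.lt_floor_add_one _
  have hre : (w - j).re = w.re - j := by simp
  have hball : w - j ∈ Metric.closedBall (0 : ℂ) (2 + B) := by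
    rw [mem_closedBall_zero_iff]
    refine (norm_le_abs_re_add_abs_im _).trans ?_
    rw [hre, abs_of_nonneg (by linarith), show (w - j).im = w.im by simp]
    linarith
  calc ‖(Gamma w)⁻¹‖ = ‖(Gamma (w - j + j))⁻¹‖ := by rw [sub_add_cancel]
    _ ≤ ‖(Gamma (w - j))⁻¹‖ := norm_inv_Gamma_add_nat_le (by rw [hre]; linarith) j
    _ ≤ max K 0 := (hK _ hball).trans (le_max_left _ _)

theorem exists_norm_inv_Gamma_le (B : ℝ) :
    ∃ K ≥ 0, ∀ (s : ℂ) (m : ℕ), |s.im| ≤ B → 1 ≤ s.re + m →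
      ‖(Gamma s)⁻¹‖ ≤ K * (‖s‖ + 2 * m) ^ m := by
  obtain ⟨K, hK0, hK⟩ := exists_norm_inv_Gamma_le_of_one_le_re B
  refine ⟨K, hK0, fun s m him hre => ?_⟩
  have hw : ‖s + m‖ + m ≤ ‖s‖ + 2 * m := by
    linarith [norm_add_le s m, (norm_natCast m : ‖(m : ℂ)‖ = m)]
  calc ‖(Gamma s)⁻¹‖ = ‖(Gamma (s + m - m))⁻¹‖ := by rw [add_sub_cancel_right]
    _ ≤ (‖s + m‖ + m) ^ m * ‖(Gamma (s + m))⁻¹‖ := norm_inv_Gamma_sub_nat_le _ _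
    _ ≤ (‖s‖ + 2 * m) ^ m * K := by
        gcongr
        exact hK _ (by simpa using hre) (by simpa using him)
    _ = K * (‖s‖ + 2 * m) ^ m := mul_comm _ _

theorem eventually_norm_inv_Gamma_mul_natCast_add_le {ρ q : ℝ} (hρq : -ρ < q) (hq : 0 ≤ q)
    (μ : ℂ) : ∃ K ≥ 0, ∃ L ≥ 0, ∀ᶠ k : ℕ in atTop,
      ‖(Gamma (ρ * k + μ))⁻¹‖ ≤ K * ((L * (k + 1)) ^ q) ^ k := by
  obtain ⟨K, hK0, hK⟩ := exists_norm_inv_Gamma_le |μ.im|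
  set L := |ρ| + ‖μ‖ + 2 * q + 1
  refine ⟨K, hK0, L, by positivity, ?_⟩
  have hlarge : ∀ᶠ k : ℕ in atTop, 2 - μ.re ≤ (ρ + q) * k :=
    (tendsto_natCast_atTop_atTop.const_mul_atTop (by linarith)).eventually_ge_atTop _
  filter_upwards [hlarge] with k hk
  -- shift `ρ k + μ` right by `m = ⌊q k⌋₊ ≤ q k` steps, which reaches `re ≥ 1` for large `k`
  set m := ⌊q * k⌋₊
  have hm : (m : ℝ) ≤ q * k := Nat.floor_le (by positivity)
  have hm' : q * k < m + 1 := Nat.lt_floor_add_one _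
  have hs : ‖(ρ : ℂ) * k + μ‖ ≤ |ρ| * k + ‖μ‖ := by
    simpa using norm_add_le ((ρ : ℂ) * k) μ
  have hbase : 1 ≤ L * (k + 1) := by
    have : 1 ≤ L := le_add_of_nonneg_left (by positivity)
    nlinarith [(k.cast_nonneg : (0 : ℝ) ≤ k)]
  calc ‖(Gamma (ρ * k + μ))⁻¹‖ ≤ K * (‖(ρ : ℂ) * k + μ‖ + 2 * m) ^ m :=
        hK _ m (by simp) (by rw [show ((ρ : ℂ) * k + μ).re = ρ * k + μ.re by simp]; linarith)
    _ ≤ K * (L * (k + 1)) ^ (m : ℝ) := by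
        rw [Real.rpow_natCast]
        gcongr
        nlinarith [abs_nonneg ρ, norm_nonneg μ, (k.cast_nonneg : (0 : ℝ) ≤ k)]
    _ ≤ K * ((L * (k + 1)) ^ q) ^ k := by
        rw [← Real.rpow_natCast _ k, ← Real.rpow_mul (by positivity)]
        gcongr

end Complex

theorem Real.inv_factorial_le_exp_one_mul_pow (k : ℕ) :
    (k.factorial : ℝ)⁻¹ ≤ Real.exp 1 * (Real.exp 1 / (k + 1)) ^ k := by
  have h := Real.pow_div_factorial_le_exp ((k : ℝ) + 1) (by positivity) k
  rw [Real.exp_add, ← Real.exp_one_pow, div_le_iff₀ (by positivity)] at h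
  rw [div_pow, mul_div_assoc', le_div_iff₀ (by positivity), inv_mul_eq_div,
    div_le_iff₀ (by positivity)]
  linarith

theorem tendsto_mul_rpow_div_atTop {q : ℝ} (hq : q < 1) {L : ℝ} (hL : 0 ≤ L) (C : ℝ) :
    Tendsto (fun x : ℝ => C * (L * x) ^ q / x) atTop (𝓝 0) := by
  have h := (tendsto_rpow_neg_atTop (by linarith : 0 < 1 - q)).const_mul (C * L ^ q)
  rw [mul_zero] at h
  refine h.congr' ?_
  filter_upwards [eventually_gt_atTop 0] with x hx
  rw [Real.mul_rpow hL hx.le, neg_sub, Real.rpow_sub hx, Real.rpow_one]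
  ring

noncomputable def wrightCoeff (ρ : ℝ) (μ : ℂ) (k : ℕ) : ℂ :=
  ((k.factorial : ℂ) * Complex.Gamma (ρ * k + μ))⁻¹

theorem natCast_add_one_mul_wrightCoeff_succ (ρ : ℝ) (μ : ℂ) (k : ℕ) :
    ((k : ℂ) + 1) * wrightCoeff ρ μ (k + 1) = wrightCoeff ρ (ρ + μ) k := by
  have hk : (k : ℂ) + 1 ≠ 0 := Nat.cast_add_one_ne_zero k
  simp only [wrightCoeff, Nat.factorial_succ]
  push_cast
  rw [show (ρ : ℂ) * (k + 1) + μ = ρ * k + (ρ + μ) by ring, mul_assoc, mul_inv, ← mul_assoc,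
    mul_inv_cancel₀ hk, one_mul]

theorem eventually_norm_wrightCoeff_mul_pow_le {ρ : ℝ} (hρ : -1 < ρ) (μ : ℂ) {r : ℝ}
    (hr : 0 ≤ r) : ∃ K, ∀ᶠ k : ℕ in atTop, ‖wrightCoeff ρ μ k‖ * r ^ k ≤ K * (1 / 2) ^ k := by
  obtain ⟨q, hq, hq1⟩ := exists_between (max_lt (neg_lt.mp hρ) zero_lt_one)
  obtain ⟨K, hK0, L, hL0, hΓ⟩ := Complex.eventually_norm_inv_Gamma_mul_natCast_add_le
    ((le_max_left _ _).trans_lt hq) ((le_max_right _ _).trans hq.le) μ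
  set θ : ℕ → ℝ := fun k => r * Real.exp 1 * (L * (k + 1)) ^ q / (k + 1)
  have hθ : Tendsto θ atTop (𝓝 0) :=
    (tendsto_mul_rpow_div_atTop hq1 hL0 _).comp
      (tendsto_atTop_add_const_right _ 1 tendsto_natCast_atTop_atTop)
  refine ⟨K * Real.exp 1, ?_⟩
  filter_upwards [hΓ, hθ.eventually (eventually_le_nhds one_half_pos)] with k hΓk hθk
  calc ‖wrightCoeff ρ μ k‖ * r ^ k
      = (k.factorial : ℝ)⁻¹ * ‖(Complex.Gamma (ρ * k + μ))⁻¹‖ * r ^ k := by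
        rw [wrightCoeff, mul_inv, norm_mul, norm_inv, Complex.norm_natCast]
    _ ≤ (Real.exp 1 * (Real.exp 1 / (k + 1)) ^ k) * (K * ((L * (k + 1)) ^ q) ^ k) * r ^ k := by
        gcongr
        exact Real.inv_factorial_le_exp_one_mul_pow k
    _ = K * Real.exp 1 * θ k ^ k := by
        simp only [θ, div_pow, mul_pow]
        ring
    _ ≤ K * Real.exp 1 * (1 / 2) ^ k := by
        gcongr

theorem summable_norm_wrightCoeff_mul_pow {ρ : ℝ} (hρ : -1 < ρ) (μ : ℂ) {r : ℝ} (hr : 0 ≤ r) :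
    Summable fun k => ‖wrightCoeff ρ μ k‖ * r ^ k := by
  obtain ⟨K, hK⟩ := eventually_norm_wrightCoeff_mul_pow_le hρ μ hr
  refine .of_norm_bounded_eventually_nat
    ((summable_geometric_of_lt_one (by norm_num : (0 : ℝ) ≤ 1 / 2) (by norm_num)).mul_left K) ?_
  filter_upwards [hK] with k hk
  rwa [Real.norm_of_nonneg (by positivity)]

section PowerSeries

variable {𝕜 E : Type*} [RCLike 𝕜] [NormedAddCommGroup E] [NormedSpace 𝕜 E] [CompleteSpace E]

theorem hasDerivAt_tsum_pow_smul {b : ℕ → E}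
    (hb : ∀ r : ℝ, 0 ≤ r → Summable fun k => ‖b k‖ * r ^ k) (z : 𝕜) :
    HasDerivAt (fun w => ∑' k, w ^ k • b k) (∑' k : ℕ, (((k : 𝕜) + 1) * z ^ k) • b (k + 1)) z := by
  set R := ‖z‖ + 1
  have hz : z ∈ Metric.ball (0 : 𝕜) R := mem_ball_zero_iff.mpr (lt_add_one _)
  have hbound : ∀ k : ℕ, ∀ w ∈ Metric.ball (0 : 𝕜) R,
      ‖((k : 𝕜) * w ^ (k - 1)) • b k‖ ≤ ‖b k‖ * (2 * R) ^ k := by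
    intro k w hw
    have hR : 1 ≤ R := le_add_of_nonneg_left (norm_nonneg z)
    have hw : ‖w‖ ^ (k - 1) ≤ R ^ k :=
      (pow_le_pow_left₀ (norm_nonneg w) (mem_ball_zero_iff.mp hw).le _).trans
        (pow_le_pow_right₀ hR (Nat.sub_le k 1))
    rw [norm_smul, norm_mul, norm_pow, RCLike.norm_natCast, mul_pow, mul_comm]
    gcongr
    exact_mod_cast (Nat.lt_two_pow_self).le
  have hsum := hb (2 * R) (by positivity)
  have hsum_z : Summable fun k => z ^ k • b k :=
    .of_norm_bounded (hb ‖z‖ (norm_nonneg z)) fun k => by rw [norm_smul, norm_pow, mul_comm]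
  have h := hasDerivAt_tsum_of_isPreconnected (g := fun k w => w ^ k • b k) hsum
    Metric.isOpen_ball (convex_ball 0 R).isPreconnected
    (fun k w _ => (hasDerivAt_pow k w).smul_const (b k)) hbound hz hsum_z hz
  rw [(Summable.of_norm_bounded hsum fun k => hbound k z hz).tsum_eq_zero_add] at h
  simpa using h

end PowerSeries

section WrightSeries

variable {𝔸 : Type*} [NormedRing 𝔸] [NormedAlgebra ℂ 𝔸] [NormOneClass 𝔸] {ρ : ℝ}

theorem summable_norm_wrightCoeff_smul_pow_mul_pow (hρ : -1 < ρ) (μ : ℂ) (a : 𝔸) {r : ℝ}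
    (hr : 0 ≤ r) : Summable fun k => ‖wrightCoeff ρ μ k • a ^ k‖ * r ^ k := by
  refine .of_nonneg_of_le (fun k => by positivity) (fun k => ?_)
    (summable_norm_wrightCoeff_mul_pow hρ μ (mul_nonneg (norm_nonneg a) hr))
  calc ‖wrightCoeff ρ μ k • a ^ k‖ * r ^ k ≤ ‖wrightCoeff ρ μ k‖ * ‖a‖ ^ k * r ^ k := by
        gcongr
        exact (norm_smul_le _ _).trans (by gcongr; exact norm_pow_le a k)
    _ = ‖wrightCoeff ρ μ k‖ * (‖a‖ * r) ^ k := by ring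

theorem summable_wrightCoeff_smul_pow [CompleteSpace 𝔸] (hρ : -1 < ρ) (μ : ℂ) (a : 𝔸) :
    Summable fun k => wrightCoeff ρ μ k • a ^ k :=
  .of_norm <| by simpa using summable_norm_wrightCoeff_smul_pow_mul_pow hρ μ a zero_le_one

theorem hasDerivAt_tsum_wrightCoeff_smul_smul_pow [CompleteSpace 𝔸] (hρ : -1 < ρ) (μ : ℂ)
    (a : 𝔸) (z : ℂ) :
    HasDerivAt (fun w : ℂ => ∑' k, wrightCoeff ρ μ k • (w • a) ^ k)
      (a * ∑' k, wrightCoeff ρ (ρ + μ) k • (z • a) ^ k) z := by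
  have h := hasDerivAt_tsum_pow_smul
    (fun r hr => summable_norm_wrightCoeff_smul_pow_mul_pow hρ μ a hr) z
  have hterm : ∀ k : ℕ, (((k : ℂ) + 1) * z ^ k) • (wrightCoeff ρ μ (k + 1) • a ^ (k + 1)) =
      a * (wrightCoeff ρ (ρ + μ) k • (z • a) ^ k) := by
    intro k
    rw [smul_smul, smul_pow, smul_smul, mul_smul_comm, ← pow_succ']
    congr 1
    linear_combination z ^ k * natCast_add_one_mul_wrightCoeff_succ ρ μ k
  rw [← (summable_wrightCoeff_smul_pow hρ (ρ + μ) (z • a)).tsum_mul_left, ← tsum_congr hterm]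
  simpa only [smul_pow, smul_smul, mul_comm] using h

end WrightSeries

theorem wrightM_deriv {n : ℕ} (ρ : ℝ) (hρ : -1 < ρ) (μ : ℂ)
    (A : Matrix (Fin n) (Fin n) ℂ) (z : ℂ) (i j : Fin n) :
    deriv (fun w : ℂ => wrightM ρ μ (w • A) i j) z =
      (A * wrightM ρ ((ρ : ℂ) + μ) (z • A)) i j := by
  let _ : NormedRing (Matrix (Fin n) (Fin n) ℂ) := Matrix.linftyOpNormedRing
  let _ : NormedAlgebra ℂ (Matrix (Fin n) (Fin n) ℂ) := Matrix.linftyOpNormedAlgebra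
  have _ : Nonempty (Fin n) := ⟨i⟩
  -- `wrightM` unfolds to this series, and the `ℓ∞` operator norm induces the entrywise
  -- topology in which its `tsum` is taken
  have h := hasDerivAt_tsum_wrightCoeff_smul_smul_pow hρ μ A z
  exact ((Matrix.entryLinearMap ℂ ℂ i j).toContinuousLinearMap.hasFDerivAt.comp_hasDerivAt
    z h).deriv
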